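/- Let A ⊆ D^+ be a collection of dyadic intervals (possibly including ∅) that arises as the set of all initial segments of a nonempty family of branches (i.e., A is a union over branches of their members). Then the Haar multiplier P_A with coefficients a_I = 1 for I ∈ A and a_I = 0 otherwise satisfies ‖P_A‖_{L_1→L_1} ≤ 1, and hence P_A is a norm-one projection onto the closed span of {h_I : I ∈ A} in L_1. -/

import Mathlib

open MeasureTheory Filter Set
open scoped ENNReal

noncomputable section
open Classical

/-- The dyadic interval of level `n` and position `i`. -/
def dyI (n i : ℕ) : Set ℝ := Set.Ico ((i : ℝ) / 2 ^ n) ((i + 1 : ℝ) / 2 ^ n)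

/-- The Haar function of the dyadic interval of level `n`, position `i`. -/
def haarFn (n i : ℕ) : ℝ → ℝ := fun x =>
  if x ∈ dyI (n + 1) (2 * i) then 1 else if x ∈ dyI (n + 1) (2 * i + 1) then -1 else 0

/-- Indexing of `D⁺`: `none` is the "empty" index `∅`, `some (n, i)` a dyadic interval. -/
def haarP : Option (ℕ × ℕ) → ℝ → ℝ
  | none => (Set.Ico (0 : ℝ) 1).indicator 1
  | some (n, i) => haarFn n i

/-- The interval supporting a given index of `D⁺` (with the convention that `∅` is
supported on `[0,1)`). -/
def suppI : Option (ℕ × ℕ) → Set ℝ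
  | none => Set.Ico (0 : ℝ) 1
  | some p => dyI p.1 p.2

def lenI : Option (ℕ × ℕ) → ℝ
  | none => 1
  | some (n, _i) => 1 / 2 ^ n

def validIdx : Option (ℕ × ℕ) → Prop
  | none => True
  | some (n, i) => i < 2 ^ n

/-- The position of the `k`-th member of a branch determined by signs `θ`
(`θ k = true` means the branch turns to the left half at step `k`). -/
def branchPos (θ : ℕ → Bool) : ℕ → ℕ
  | 0 => 0
  | 1 => 0
  | k + 2 => 2 * branchPos θ (k + 1) + (if θ (k + 1) then 0 else 1)

/-- The `k`-th member `I_k` of the branch determined by `θ`, as an index in `D⁺`. -/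
def branchI (θ : ℕ → Bool) (k : ℕ) : Option (ℕ × ℕ) :=
  if k = 0 then none else some (k - 1, branchPos θ k)

/-- The sign `θ_k`, with the convention `θ_0 = 1`. -/
def branchSgn (θ : ℕ → Bool) (k : ℕ) : ℝ :=
  if k = 0 then 1 else if θ k then 1 else -1

/-- The weight `|I_k|⁻¹`, with the convention `|I_0|⁻¹ = |∅|⁻¹ = 1`. -/
def branchWt (k : ℕ) : ℝ := if k = 0 then 1 else 2 ^ (k - 1)

/-- `B_k = I_k \ I_{k+1}`. -/
def branchB (θ : ℕ → Bool) (k : ℕ) : Set ℝ := suppI (branchI θ k) \ suppI (branchI θ (k + 1))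


/-- Lebesgue measure restricted to `[0,1)`. -/
def mu01 : Measure ℝ := volume.restrict (Set.Ico 0 1)

lemma mu01_ne_top (s : Set ℝ) : mu01 s ≠ ⊤ := by
  refine ne_top_of_le_ne_top ?_ (measure_mono (Set.subset_univ s))
  have : mu01 Set.univ = volume (Set.Ico (0:ℝ) 1) := by
    simp [mu01]
  rw [this, Real.volume_Ico]
  exact ENNReal.ofReal_ne_top

/-- indicator of a measurable set, as an element of `L₁[0,1)`. -/
def indL1 (s : Set ℝ) (hs : MeasurableSet s) : Lp ℝ 1 mu01 :=
  indicatorConstLp 1 hs (mu01_ne_top s) (1 : ℝ)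

/-- The Haar system as elements of `L₁[0,1)`, indexed by `D⁺`. -/
def haarL1 : Option (ℕ × ℕ) → Lp ℝ 1 mu01
  | none => indL1 (Set.Ico (0 : ℝ) 1) measurableSet_Ico
  | some (n, i) => indL1 (dyI (n + 1) (2 * i)) measurableSet_Ico
      - indL1 (dyI (n + 1) (2 * i + 1)) measurableSet_Ico

section Tensor

variable {X : Type*} [NormedAddCommGroup X] [NormedSpace ℝ X]

/-- the elementary tensor `f ⊗ x` as an element of the Bochner space `L₁([0,1); X)`. -/
def tensorL1 (f : Lp ℝ 1 mu01) (x : X) : Lp X 1 mu01 :=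
  ((L1.integrable_coeFn f).smul_const x).toL1 _

/-- For an operator `T` on `L₁(X)`, a functional `g ∈ X*` and a vector `x ∈ X`, the operator
`T^{(g,x)} : L₁ → L₁` defined by `⟨e*, T^{(g,x)} e⟩ = ⟨e* ⊗ g, T (e ⊗ x)⟩`; concretely
`T^{(g,x)} e = (s ↦ g ((T (e ⊗ x)) s))`. -/
def entryFun (T : Lp X 1 mu01 →L[ℝ] Lp X 1 mu01) (g : X →L[ℝ] ℝ) (x : X)
    (f : Lp ℝ 1 mu01) : Lp ℝ 1 mu01 :=
  (g.integrable_comp (L1.integrable_coeFn (T (tensorL1 f x)))).toL1 _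

end Tensor

/-- the linear span `Z` of the indicators of dyadic intervals. -/
def dyadicSpan : Submodule ℝ (ℝ → ℝ) :=
  Submodule.span ℝ {f | ∃ n i, i < 2 ^ n ∧ f = (dyI n i).indicator 1}

/-- A Haar system space norm: a norm on the span `Z` of the dyadic indicators which is
invariant under equidistribution and gives `χ_{[0,1)}` norm one.  The corresponding Haar
system space is the completion of `Z` under this norm. -/
structure HaarSystemNorm where
  N : (ℝ → ℝ) → ℝ
  nonneg : ∀ f, 0 ≤ N f
  add_le : ∀ f g, f ∈ dyadicSpan → g ∈ dyadicSpan → N (f + g) ≤ N f + N g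
  smul_eq : ∀ (c : ℝ) f, f ∈ dyadicSpan → N (c • f) = |c| * N f
  eq_zero : ∀ f, f ∈ dyadicSpan → N f = 0 → f = 0
  distrib_inv : ∀ f g, f ∈ dyadicSpan → g ∈ dyadicSpan →
    (∀ t : ℝ, volume {x | t < |f x|} = volume {x | t < |g x|}) → N f = N g
  norm_one : N ((Set.Ico (0 : ℝ) 1).indicator 1) = 1

/-- A realization of the Haar system space determined by a Haar system norm:
a Banach space `X` together with a linear embedding `j` of the span of the dyadic
indicators, which is isometric on the span and has dense range. -/
structure HaarSystemSpace (X : Type*) [NormedAddCommGroup X] [NormedSpace ℝ X] where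
  hn : HaarSystemNorm
  j : (ℝ → ℝ) →ₗ[ℝ] X
  norm_j : ∀ f ∈ dyadicSpan, ‖j f‖ = hn.N f
  dense_j : DenseRange (fun f : dyadicSpan => j f)

/-- the `X`-normalized Haar system `μ_L h_L` in a Haar system space. -/
def HaarSystemSpace.e {X : Type*} [NormedAddCommGroup X] [NormedSpace ℝ X]
    (H : HaarSystemSpace X) (L : Option (ℕ × ℕ)) : X :=
  ‖H.j ((suppI L).indicator 1)‖⁻¹ • H.j (haarP L)

section Factors

variable {X : Type*} [NormedAddCommGroup X] [NormedSpace ℝ X]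

/-- `T` is a `C`-factor of `S` with error `ε`. -/
def IsFactor (C ε : ℝ) (T S : X →L[ℝ] X) : Prop :=
  ∃ A B : X →L[ℝ] X, ‖B.comp (T.comp A) - S‖ ≤ ε ∧ ‖A‖ * ‖B‖ ≤ C

/-- `T` is a `C`-projectional factor of `S` with error `ε`: here `A : X → Y ⊆ X` is the
isomorphism onto a complemented subspace and `B = A⁻¹P` where `P` is the projection,
so that `B ∘ A = Id`. -/
def IsProjFactor (C ε : ℝ) (T S : X →L[ℝ] X) : Prop :=
  ∃ A B : X →L[ℝ] X, B.comp A = ContinuousLinearMap.id ℝ X ∧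
    ‖B.comp (T.comp A) - S‖ ≤ ε ∧ ‖A‖ * ‖B‖ ≤ C

end Factors

/-- the `n`-th Rademacher function `r_n = ∑_{L ∈ D_n} h_L`. -/
def rademacherFn (n : ℕ) : ℝ → ℝ := fun x => ∑ i ∈ Finset.range (2 ^ n), haarFn n i x

/-- Enumeration of the Haar system in the usual linear order `ι`
(`haarEnum 1 = h_∅`, `haarEnum 2 = h_{[0,1)}`, then level by level). -/
def haarEnum : ℕ → ℝ → ℝ := fun m =>
  if m ≤ 1 then (Set.Ico (0 : ℝ) 1).indicator 1
  else haarFn (Nat.log 2 (m - 1)) (m - 2 ^ Nat.log 2 (m - 1) - 1)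

/-- extraction of binary digits: `digitsFn x k` records whether the `k`-th digit of `x`
is `0`, i.e. whether the branch through `x` turns left at step `k`. -/
def digitsFn (x : ℝ) : ℕ → Bool := fun k => decide (⌊x * 2 ^ k⌋ % 2 = 0)

/-- the coin-tossing measure on the space of branches `[D⁺] ≃ {-1,1}^ℕ`, realized as the
image of Lebesgue measure on `[0,1)` under the binary-digit identification. -/
def muBr : Measure (ℕ → Bool) := Measure.map digitsFn mu01

/-- `h_Γ^θ = ∑_{J ∈ Γ} θ_J h_J` for a finite collection `Γ` of dyadic intervals. -/
def hGamma (Γ : Finset (ℕ × ℕ)) (θ : ℕ × ℕ → Bool) : ℝ → ℝ :=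
  fun x => ∑ J ∈ Γ, (if θ J then (1:ℝ) else -1) * haarFn J.1 J.2 x

/-- `Γ* = ∪ {I : I ∈ Γ}`. -/
def GammaStar (Γ : Finset (ℕ × ℕ)) : Set ℝ := ⋃ J ∈ Γ, dyI J.1 J.2

/-- `|Γ*|`, the total length of a disjoint finite collection of dyadic intervals. -/
def lenGamma (Γ : Finset (ℕ × ℕ)) : ℝ := ∑ J ∈ Γ, (1 : ℝ) / 2 ^ J.1



/-!
`P_A` is the conditional expectation onto the σ-algebra generated by the members of `A`.
A Haar function `h_I` with `I ∈ A` is measurable for it: on a branch through `I` the next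
member is a child of `I` lying in `A`, and the other child is the difference. If `I ∉ A`, every
member of `A` contains `I` or is disjoint from it (a member strictly inside `I` would put `I` on
its branch), hence so does every set of the σ-algebra, and `h_I`, having mean zero on `I`,
integrates to zero over all of them, so its conditional expectation vanishes. A conditional
expectation is a contractive idempotent on `L₁`, and as the Haar system is dense in `L₁`, an
operator acting on it diagonally with eigenvalues in `{0, 1}` is the projection onto the closed
span of the Haar functions with eigenvalue `1`.
-/

lemma subset_or_disjoint_of_measurableSet_generateFrom {α : Type*} {G : Set (Set α)} {t : Set α}
    (hG : ∀ u ∈ G, t ⊆ u ∨ Disjoint u t) {s : Set α}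
    (hs : MeasurableSet[.generateFrom G] s) : t ⊆ s ∨ Disjoint s t := by
  induction s, hs using MeasurableSpace.generateFrom_induction with
  | hC u hu => exact hG u hu
  | empty => exact .inr (empty_disjoint t)
  | compl u _ hu =>
    exact hu.symm.imp (fun h => h.symm.subset_compl_right) (disjoint_compl_left.mono_right ·)
  | iUnion f _ hf =>
    by_cases h : ∃ n, t ⊆ f n
    · obtain ⟨n, hn⟩ := h
      exact .inl (hn.trans (subset_iUnion f n))
    · exact .inr (disjoint_iUnion_left.2 fun n => (hf n).resolve_left (not_exists.1 h n))

section IndicatorsInLp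

open scoped symmDiff Topology

variable {α : Type*} {p : ℝ≥0∞} [Fact (1 ≤ p)]

lemma Lp.indicatorConstLp_mem_of_isPiSystem [m : MeasurableSpace α] {μ : Measure α}
    [IsFiniteMeasure μ] (hp : p ≠ ∞) {V : Submodule ℝ (Lp ℝ p μ)}
    (hV : IsClosed (V : Set (Lp ℝ p μ))) {C : Set (Set α)} (hgen : m = .generateFrom C)
    (hC : IsPiSystem C) (huniv : indicatorConstLp p .univ (measure_ne_top μ univ) (1 : ℝ) ∈ V)
    (hbasic : ∀ s ∈ C, ∀ hs : MeasurableSet s,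
      indicatorConstLp p hs (measure_ne_top μ s) (1 : ℝ) ∈ V)
    {s : Set α} (hs : MeasurableSet s) :
    indicatorConstLp p hs (measure_ne_top μ s) (1 : ℝ) ∈ V := by
  have hunion : ∀ {s t : Set α} (hs : MeasurableSet s) (ht : MeasurableSet t), Disjoint s t →
      indicatorConstLp p (hs.union ht) (measure_ne_top μ _) (1 : ℝ) =
        indicatorConstLp p hs (measure_ne_top μ s) 1 +
          indicatorConstLp p ht (measure_ne_top μ t) 1 :=
    fun hs ht hst => indicatorConstLp_disjoint_union hs ht _ _ hst 1
  -- The sets whose indicator lies in `V` form a Dynkin system containing `C`.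
  induction s, hs using MeasurableSpace.induction_on_inter hgen hC with
  | empty => simp
  | basic t ht => exact hbasic t ht _
  | compl t ht h =>
    have hsum := hunion ht ht.compl disjoint_compl_right
    simp only [union_compl_self] at hsum
    exact eq_sub_of_add_eq' hsum.symm ▸ V.sub_mem huniv h
  | iUnion f hf hfm h =>
    have hacc : ∀ n, MeasurableSet (accumulate f n) := fun n => by
      rw [accumulate_def]
      exact .biUnion (to_countable _) fun i _ => hfm i
    have hmem : ∀ n, indicatorConstLp p (hacc n) (measure_ne_top μ _) (1 : ℝ) ∈ V := by
      intro n
      induction n with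
      | zero => simpa only [accumulate_zero_nat] using h 0
      | succ n ih =>
        have hsum := hunion (hacc n) (hfm (n + 1)) (disjoint_accumulate hf n.lt_succ_self)
        simp only [← accumulate_succ] at hsum
        exact hsum ▸ V.add_mem ih (h (n + 1))
    have hsymm :
        ∀ n, μ (accumulate f n ∆ ⋃ i, f i) = μ (⋃ i, f i) - μ (accumulate f n) := by
      intro n
      rw [symmDiff_of_le (accumulate_subset_iUnion n), measure_sdiff
          (accumulate_subset_iUnion n) (hacc n).nullMeasurableSet (measure_ne_top μ _)]
    have hlim : Tendsto (fun n => μ (accumulate f n ∆ ⋃ i, f i)) atTop (𝓝 0) := by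
      simp only [hsymm]
      simpa using ENNReal.Tendsto.sub tendsto_const_nhds
        (tendsto_measure_iUnion_accumulate (μ := μ) (f := f))
        (.inl (measure_ne_top μ (⋃ i, f i)))
    exact hV.mem_of_tendsto (tendsto_indicatorConstLp_set hp hlim) (.of_forall hmem)

lemma Lp.submodule_eq_top_of_indicatorConstLp_mem [MeasurableSpace α] {μ : Measure α}
    (hp : p ≠ ∞) {V : Submodule ℝ (Lp ℝ p μ)} (hV : IsClosed (V : Set (Lp ℝ p μ)))
    (hind : ∀ s (hs : MeasurableSet s) (hμs : μ s ≠ ∞),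
      indicatorConstLp p hs hμs (1 : ℝ) ∈ V) :
    V = ⊤ := by
  refine Submodule.eq_top_iff'.2 (Lp.induction hp (· ∈ V) (fun c s hs hμs => ?_)
    (fun _ _ _ _ _ => V.add_mem) hV)
  have hsmul : (Lp.simpleFunc.indicatorConst p hs hμs.ne c : Lp ℝ p μ)
      = c • indicatorConstLp p hs hμs.ne 1 := by
    rw [Lp.simpleFunc.coe_indicatorConst]
    refine Lp.ext ?_
    filter_upwards [indicatorConstLp_coeFn (p := p) (hs := hs) (hμs := hμs.ne) (c := c),
      Lp.coeFn_smul c (indicatorConstLp p hs hμs.ne (1 : ℝ)),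
      indicatorConstLp_coeFn (p := p) (hs := hs) (hμs := hμs.ne) (c := (1 : ℝ))]
      with x h1 h2 h3
    rw [h1, h2, Pi.smul_apply, h3]
    by_cases hx : x ∈ s <;> simp [hx]
  exact hsmul ▸ V.smul_mem c (hind s hs hμs.ne)

end IndicatorsInLp

lemma norm_condExpL1CLM_le_one {α F : Type*} [NormedAddCommGroup F] [NormedSpace ℝ F]
    [CompleteSpace F] {m m0 : MeasurableSpace α} {μ : Measure α} (hm : m ≤ m0)
    [SigmaFinite (μ.trim hm)] : ‖condExpL1CLM F hm μ‖ ≤ 1 :=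
  L1.norm_setToL1_le (dominatedFinMeasAdditive_condExpInd F hm μ) zero_le_one

section DiagonalProjection

variable {𝕜 E ι : Type*} [NormedField 𝕜] [NormedAddCommGroup E] [NormedSpace 𝕜 E]
  {e : ι → E} {P : E →L[𝕜] E} {A : Set ι}

lemma ContinuousLinearMap.comp_self_of_apply_eq_indicator_smul
    (he : Dense (Submodule.span 𝕜 (range e) : Set E))
    (hP : ∀ i, P (e i) = A.indicator (fun _ => (1 : 𝕜)) i • e i) : P.comp P = P :=
  ContinuousLinearMap.ext_on he <| by
    rintro _ ⟨i, rfl⟩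
    by_cases hi : i ∈ A <;> simp [hP, hi]

lemma ContinuousLinearMap.range_eq_closure_span_of_apply_eq_indicator_smul
    (he : Dense (Submodule.span 𝕜 (range e) : Set E))
    (hP : ∀ i, P (e i) = A.indicator (fun _ => (1 : 𝕜)) i • e i) :
    range P = ((Submodule.span 𝕜 (e '' A)).topologicalClosure : Set E) := by
  rw [Submodule.topologicalClosure_coe]
  apply Subset.antisymm
  · have hspan :
        (Submodule.span 𝕜 (range e) : Set E) ⊆ P ⁻¹' Submodule.span 𝕜 (e '' A) := by
      refine Submodule.span_le
        (p := (Submodule.span 𝕜 (e '' A)).comap (P : E →ₗ[𝕜] E)).2 ?_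
      rintro _ ⟨i, rfl⟩
      by_cases hi : i ∈ A
      · simpa [hP, hi] using Submodule.subset_span (mem_image_of_mem e hi)
      · simp [hP, hi]
    rintro _ ⟨x, rfl⟩
    exact closure_mono (image_subset_iff.2 hspan)
      (image_closure_subset_closure_image P.continuous ⟨x, he x, rfl⟩)
  · have hfix : (Submodule.span 𝕜 (e '' A) : Set E) ⊆ {x | P x = x} := by
      refine Submodule.span_le (p := LinearMap.eqLocus (P : E →ₗ[𝕜] E) LinearMap.id).2 ?_
      rintro _ ⟨i, hi, rfl⟩
      simp [hP, hi]
    exact fun x hx => ⟨x, closure_minimal hfix (isClosed_eq P.continuous continuous_id) hx⟩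

end DiagonalProjection

section DyadicIntervals

lemma dyI_zero_zero : dyI 0 0 = Ico (0 : ℝ) 1 := by
  simp [dyI]

lemma measurableSet_dyI (n i : ℕ) : MeasurableSet (dyI n i) := measurableSet_Ico

lemma dyI_nonempty (n i : ℕ) : (dyI n i).Nonempty :=
  nonempty_Ico.2 (by gcongr; linarith)

lemma dyI_two_mul_union (n i : ℕ) :
    dyI (n + 1) (2 * i) ∪ dyI (n + 1) (2 * i + 1) = dyI n i := by
  have h : ∀ c : ℝ, (2 * c) / 2 ^ (n + 1) = c / 2 ^ n := fun c => by
    rw [pow_succ]; field_simp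
  unfold dyI
  push_cast
  rw [add_assoc (2 * (i : ℝ)), one_add_one_eq_two, ← mul_add_one, h, h]
  exact Ico_union_Ico_eq_Ico (by rw [← h]; gcongr; linarith) (by rw [← h]; gcongr; linarith)

lemma dyI_two_mul_subset (n i : ℕ) : dyI (n + 1) (2 * i) ⊆ dyI n i :=
  subset_union_left.trans_eq (dyI_two_mul_union n i)

lemma dyI_two_mul_add_one_subset (n i : ℕ) : dyI (n + 1) (2 * i + 1) ⊆ dyI n i :=
  subset_union_right.trans_eq (dyI_two_mul_union n i)

lemma disjoint_dyI_two_mul (n i : ℕ) :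
    Disjoint (dyI (n + 1) (2 * i)) (dyI (n + 1) (2 * i + 1)) := by
  unfold dyI
  push_cast
  exact Ico_disjoint_Ico_same

lemma dyI_subset_dyI_div_two (n j : ℕ) : dyI (n + 1) j ⊆ dyI n (j / 2) := by
  rcases Nat.even_or_odd' j with ⟨i, rfl | rfl⟩
  · rw [Nat.mul_div_cancel_left i two_pos]
    exact dyI_two_mul_subset n i
  · rw [show (2 * i + 1) / 2 = i by omega]
    exact dyI_two_mul_add_one_subset n i

lemma dyI_subset_dyI_div_two_pow (n m j : ℕ) : dyI (n + m) j ⊆ dyI n (j / 2 ^ m) := by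
  induction m generalizing j with
  | zero => simp
  | succ m ih =>
    rw [pow_succ', ← Nat.div_div_eq_div_mul]
    exact (dyI_subset_dyI_div_two (n + m) j).trans (ih (j / 2))

lemma disjoint_dyI {n i j : ℕ} (h : i ≠ j) : Disjoint (dyI n i) (dyI n j) := by
  wlog hij : i < j generalizing i j
  · exact (this h.symm (by omega)).symm
  refine Ico_disjoint_Ico.2 (le_trans (min_le_left _ _) (le_trans ?_ (le_max_right _ _)))
  gcongr
  exact_mod_cast hij

lemma eq_of_not_disjoint_dyI {n i j : ℕ} (h : ¬Disjoint (dyI n i) (dyI n j)) : i = j :=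
  not_not.1 (mt disjoint_dyI h)

lemma dyI_subset_or_disjoint {n k : ℕ} (h : n ≤ k) (i j : ℕ) :
    dyI k j ⊆ dyI n i ∨ Disjoint (dyI k j) (dyI n i) := by
  obtain ⟨m, rfl⟩ := Nat.exists_eq_add_of_le h
  by_cases hi : j / 2 ^ m = i
  · exact .inl (hi ▸ dyI_subset_dyI_div_two_pow n m j)
  · exact .inr ((disjoint_dyI hi).mono_left (dyI_subset_dyI_div_two_pow n m j))

end DyadicIntervals

section Branches

lemma branchI_succ (θ : ℕ → Bool) (k : ℕ) :
    branchI θ (k + 1) = some (k, branchPos θ (k + 1)) := by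
  simp [branchI]

-- At `k = 0` this reads `[0,1) = dyI 0 0`, thanks to `0 - 1 = 0` in `ℕ`.
lemma suppI_branchI (θ : ℕ → Bool) (k : ℕ) :
    suppI (branchI θ k) = dyI (k - 1) (branchPos θ k) := by
  cases k with
  | zero => exact dyI_zero_zero.symm
  | succ k => rw [branchI_succ]; rfl

lemma branchPos_succ_succ_div_two (θ : ℕ → Bool) (k : ℕ) :
    branchPos θ (k + 2) / 2 = branchPos θ (k + 1) := by
  simp only [branchPos]
  split <;> omega

lemma antitone_suppI_branchI (θ : ℕ → Bool) : Antitone fun k => suppI (branchI θ k) := by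
  refine antitone_nat_of_succ_le fun k => ?_
  simp only [suppI_branchI]
  cases k with
  | zero => rfl
  | succ k =>
    simpa [branchPos_succ_succ_div_two] using dyI_subset_dyI_div_two k (branchPos θ (k + 2))

def branchMembers (S : Set (ℕ → Bool)) : Set (Option (ℕ × ℕ)) :=
  {I | ∃ θ ∈ S, ∃ k, I = branchI θ k}

lemma dyI_subset_or_disjoint_suppI_branchI {S : Set (ℕ → Bool)} {θ : ℕ → Bool}
    (hθ : θ ∈ S) {n i : ℕ} (hI : some (n, i) ∉ branchMembers S) (k : ℕ) :
    dyI n i ⊆ suppI (branchI θ k) ∨ Disjoint (suppI (branchI θ k)) (dyI n i) := by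
  rw [suppI_branchI]
  rcases le_or_gt k n with hk | hk
  · exact (dyI_subset_or_disjoint (n := k - 1) (k := n) (by omega) _ i).imp_right (·.symm)
  refine .inr <| (dyI_subset_or_disjoint (n := n) (k := k - 1) (by omega) i _).resolve_left
    fun hsub => hI ⟨θ, hθ, n + 1, ?_⟩
  have hlevel : dyI (k - 1) (branchPos θ k) ⊆ dyI n (branchPos θ (n + 1)) := by
    simpa [suppI_branchI] using antitone_suppI_branchI θ (show n + 1 ≤ k by omega)
  obtain ⟨x, hx⟩ := dyI_nonempty (k - 1) (branchPos θ k)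
  rw [branchI_succ, eq_of_not_disjoint_dyI (not_disjoint_iff.2 ⟨x, hsub hx, hlevel hx⟩)]

end Branches

section HaarMultiplier

instance : IsFiniteMeasure mu01 := ⟨(mu01_ne_top univ).lt_top⟩

lemma measurableSet_suppI (I : Option (ℕ × ℕ)) : MeasurableSet (suppI I) := by
  cases I <;> exact measurableSet_Ico

abbrev supportSigma (A : Set (Option (ℕ × ℕ))) : MeasurableSpace ℝ :=
  .generateFrom (suppI '' A)

lemma supportSigma_le (A : Set (Option (ℕ × ℕ))) : supportSigma A ≤ Real.measurableSpace :=
  MeasurableSpace.generateFrom_le (by rintro _ ⟨I, -, rfl⟩; exact measurableSet_suppI I)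

lemma volume_dyI (n i : ℕ) : volume (dyI n i) = ENNReal.ofReal (1 / 2 ^ n) := by
  rw [dyI, Real.volume_Ico]
  congr 1
  ring

lemma mu01_dyI_two_mul_eq (n i : ℕ) :
    mu01 (dyI (n + 1) (2 * i)) = mu01 (dyI (n + 1) (2 * i + 1)) := by
  have hL := dyI_two_mul_subset n i
  have hR := dyI_two_mul_add_one_subset n i
  simp only [mu01, Measure.restrict_apply (measurableSet_dyI _ _)]
  rcases dyI_subset_or_disjoint (Nat.zero_le n) 0 i with h | h <;> rw [dyI_zero_zero] at h
  · rw [inter_eq_left.2 (hL.trans h), inter_eq_left.2 (hR.trans h), volume_dyI, volume_dyI]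
  · rw [(h.mono_left hL).inter_eq, (h.mono_left hR).inter_eq]

lemma setIntegral_indL1 {s : Set ℝ} (hs : MeasurableSet s) (t : Set ℝ) (ht : MeasurableSet t) :
    ∫ x in s, indL1 t ht x ∂mu01 = mu01.real (t ∩ s) := by
  rw [indL1, setIntegral_indicatorConstLp hs ht, smul_eq_mul, mul_one]

lemma setIntegral_haarL1_eq_zero {n i : ℕ} {s : Set ℝ} (hs : MeasurableSet s)
    (h : dyI n i ⊆ s ∨ Disjoint s (dyI n i)) :
    ∫ x in s, haarL1 (some (n, i)) x ∂mu01 = 0 := by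
  have hL := dyI_two_mul_subset n i
  have hR := dyI_two_mul_add_one_subset n i
  have hcoe : (haarL1 (some (n, i)) : ℝ → ℝ) =ᵐ[mu01] fun x =>
      indL1 (dyI (n + 1) (2 * i)) (measurableSet_dyI _ _) x
        - indL1 (dyI (n + 1) (2 * i + 1)) (measurableSet_dyI _ _) x :=
    Lp.coeFn_sub _ _
  rw [integral_congr_ae (ae_restrict_of_ae hcoe),
    integral_sub (L1.integrable_coeFn _).integrableOn (L1.integrable_coeFn _).integrableOn,
    setIntegral_indL1 hs, setIntegral_indL1 hs, sub_eq_zero]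
  rcases h with h | h
  · rw [inter_eq_left.2 (hL.trans h), inter_eq_left.2 (hR.trans h), measureReal_def,
      measureReal_def, mu01_dyI_two_mul_eq]
  · rw [(h.symm.mono_left hL).inter_eq, (h.symm.mono_left hR).inter_eq]

lemma condExpL1CLM_haarL1_of_notMem {S : Set (ℕ → Bool)} (hS : S.Nonempty)
    {I : Option (ℕ × ℕ)} (hI : I ∉ branchMembers S) :
    condExpL1CLM ℝ (supportSigma_le (branchMembers S)) mu01 (haarL1 I) = 0 := by
  obtain _ | ⟨n, i⟩ := I
  · obtain ⟨θ, hθ⟩ := hS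
    exact absurd ⟨θ, hθ, 0, rfl⟩ hI
  have hzero : ∀ s, MeasurableSet[supportSigma (branchMembers S)] s → mu01 s < ⊤ →
      ∫ x in s, condExpL1CLM ℝ (supportSigma_le (branchMembers S)) mu01
        (haarL1 (some (n, i))) x ∂mu01 = 0 := by
    intro s hs _
    rw [setIntegral_condExpL1CLM _ hs]
    refine setIntegral_haarL1_eq_zero (supportSigma_le (branchMembers S) s hs)
      (subset_or_disjoint_of_measurableSet_generateFrom ?_ hs)
    rintro _ ⟨_, ⟨θ, hθ, k, rfl⟩, rfl⟩
    exact dyI_subset_or_disjoint_suppI_branchI hθ hI k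
  refine Lp.ext ((Lp.ae_eq_zero_of_forall_setIntegral_eq_zero' ℝ (supportSigma_le _) _
    one_ne_zero ENNReal.one_ne_top (fun s _ _ => (L1.integrable_coeFn _).integrableOn) hzero
    (aestronglyMeasurable_condExpL1CLM _)).trans (Lp.coeFn_zero ℝ 1 mu01).symm)

lemma measurableSet_dyI_two_mul_of_child {m : MeasurableSpace ℝ} {n i j : ℕ}
    (hp : MeasurableSet[m] (dyI n i)) (hc : MeasurableSet[m] (dyI (n + 1) j)) (hj : j / 2 = i) :
    MeasurableSet[m] (dyI (n + 1) (2 * i)) ∧ MeasurableSet[m] (dyI (n + 1) (2 * i + 1)) := by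
  have hdisj := (disjoint_dyI_two_mul n i).inter_eq.subset
  rcases (by omega : j = 2 * i ∨ j = 2 * i + 1) with rfl | rfl
  · refine ⟨hc, ?_⟩
    rw [← union_sdiff_cancel_left hdisj, dyI_two_mul_union]
    exact hp.diff hc
  · refine ⟨?_, hc⟩
    rw [← union_sdiff_cancel_right hdisj, dyI_two_mul_union]
    exact hp.diff hc

lemma aestronglyMeasurable_indL1 {m : MeasurableSpace ℝ} {s : Set ℝ} (hs : MeasurableSet[m] s)
    (hs' : MeasurableSet[Real.measurableSpace] s) : AEStronglyMeasurable[m] (indL1 s hs') mu01 :=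
  ⟨s.indicator fun _ => (1 : ℝ), stronglyMeasurable_const.indicator hs,
    indicatorConstLp_coeFn⟩

lemma aestronglyMeasurable_haarL1_of_mem {S : Set (ℕ → Bool)} {I : Option (ℕ × ℕ)}
    (hI : I ∈ branchMembers S) :
    AEStronglyMeasurable[supportSigma (branchMembers S)] (haarL1 I) mu01 := by
  have hgen : ∀ J ∈ branchMembers S, MeasurableSet[supportSigma (branchMembers S)] (suppI J) :=
    fun J hJ => MeasurableSpace.measurableSet_generateFrom ⟨J, hJ, rfl⟩
  obtain ⟨θ, hθ, k, rfl⟩ := hI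
  cases k with
  | zero => exact aestronglyMeasurable_indL1 (hgen _ ⟨θ, hθ, 0, rfl⟩) _
  | succ k =>
    have hp : MeasurableSet[supportSigma (branchMembers S)] (dyI k (branchPos θ (k + 1))) := by
      simpa [suppI_branchI] using hgen _ ⟨θ, hθ, k + 1, rfl⟩
    have hc :
        MeasurableSet[supportSigma (branchMembers S)] (dyI (k + 1) (branchPos θ (k + 2))) := by
      simpa [suppI_branchI] using hgen _ ⟨θ, hθ, k + 2, rfl⟩
    obtain ⟨hL, hR⟩ :=
      measurableSet_dyI_two_mul_of_child hp hc (branchPos_succ_succ_div_two θ k)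
    rw [branchI_succ]
    exact ((aestronglyMeasurable_indL1 hL _).sub (aestronglyMeasurable_indL1 hR _)).congr
      (Lp.coeFn_sub _ _).symm

lemma condExpL1CLM_haarL1 {S : Set (ℕ → Bool)} (hS : S.Nonempty) (I : Option (ℕ × ℕ)) :
    condExpL1CLM ℝ (supportSigma_le (branchMembers S)) mu01 (haarL1 I) =
      (branchMembers S).indicator (fun _ => (1 : ℝ)) I • haarL1 I := by
  by_cases hI : I ∈ branchMembers S
  · rw [indicator_of_mem hI, one_smul]
    exact condExpL1CLM_of_aestronglyMeasurable' _ (aestronglyMeasurable_haarL1_of_mem hI)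
  · rw [indicator_of_notMem hI, zero_smul]
    exact condExpL1CLM_haarL1_of_notMem hS hI

end HaarMultiplier

section HaarDensity

open scoped symmDiff Topology

lemma indL1_congr {s t : Set ℝ} (hs : MeasurableSet s) (ht : MeasurableSet t)
    (h : ∀ x ∈ Ico (0 : ℝ) 1, x ∈ s ↔ x ∈ t) : indL1 s hs = indL1 t ht := by
  have hst : s =ᵐ[mu01] t := eventuallyEq_set.2 <| by
    filter_upwards [ae_restrict_mem measurableSet_Ico] with x hx using h x hx
  exact Lp.ext (indicatorConstLp_coeFn.trans
    ((indicator_ae_eq_of_ae_eq_set hst).trans indicatorConstLp_coeFn.symm))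

lemma indL1_union {s t : Set ℝ} (hs : MeasurableSet s) (ht : MeasurableSet t)
    (hst : Disjoint s t) :
    indL1 (s ∪ t) (hs.union ht) = indL1 s hs + indL1 t ht :=
  indicatorConstLp_disjoint_union hs ht _ _ hst 1

lemma indL1_dyI_eq_add (n i : ℕ) :
    indL1 (dyI n i) (measurableSet_dyI n i) =
      indL1 (dyI (n + 1) (2 * i)) (measurableSet_dyI _ _) +
        indL1 (dyI (n + 1) (2 * i + 1)) (measurableSet_dyI _ _) := by
  rw [← indL1_union _ _ (disjoint_dyI_two_mul n i)]
  exact indL1_congr _ _ fun x _ => by rw [dyI_two_mul_union]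

lemma indL1_dyI_two_mul_mem_span {n i : ℕ}
    (h : indL1 (dyI n i) (measurableSet_dyI n i) ∈ Submodule.span ℝ (range haarL1)) :
    indL1 (dyI (n + 1) (2 * i)) (measurableSet_dyI _ _) ∈ Submodule.span ℝ (range haarL1) ∧
      indL1 (dyI (n + 1) (2 * i + 1)) (measurableSet_dyI _ _) ∈
        Submodule.span ℝ (range haarL1) := by
  have hh : haarL1 (some (n, i)) ∈ Submodule.span ℝ (range haarL1) :=
    Submodule.subset_span ⟨_, rfl⟩
  have hparent := indL1_dyI_eq_add n i
  constructor
  · convert Submodule.smul_mem _ (2⁻¹ : ℝ) (Submodule.add_mem _ h hh) using 1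
    rw [hparent, haarL1]
    module
  · convert Submodule.smul_mem _ (2⁻¹ : ℝ) (Submodule.sub_mem _ h hh) using 1
    rw [hparent, haarL1]
    module

lemma indL1_dyI_mem_span {n i : ℕ} (h : i < 2 ^ n) :
    indL1 (dyI n i) (measurableSet_dyI n i) ∈ Submodule.span ℝ (range haarL1) := by
  induction n generalizing i with
  | zero =>
    obtain rfl : i = 0 := by simpa using h
    rw [indL1_congr _ measurableSet_Ico fun x _ => by rw [dyI_zero_zero]]
    exact Submodule.subset_span ⟨none, rfl⟩
  | succ n ih =>
    rw [pow_succ] at h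
    obtain ⟨j, rfl | rfl⟩ := Nat.even_or_odd' i
    exacts [(indL1_dyI_two_mul_mem_span (ih (by omega))).1,
      (indL1_dyI_two_mul_mem_span (ih (by omega))).2]

lemma indL1_Ico_zero_mem_span (n : ℕ) {k : ℕ} (hk : k ≤ 2 ^ n) :
    indL1 (Ico 0 ((k : ℝ) / 2 ^ n)) measurableSet_Ico ∈ Submodule.span ℝ (range haarL1) := by
  induction k with
  | zero => simp [indL1]
  | succ k ih =>
    have hsplit :
        Ico (0 : ℝ) (((k + 1 : ℕ) : ℝ) / 2 ^ n) = Ico 0 ((k : ℝ) / 2 ^ n) ∪ dyI n k := by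
      push_cast
      exact (Ico_union_Ico_eq_Ico (by positivity) (by gcongr; linarith)).symm
    have hdisj : Disjoint (Ico (0 : ℝ) ((k : ℝ) / 2 ^ n)) (dyI n k) := Ico_disjoint_Ico_same
    rw [indL1_congr (t := Ico 0 ((k : ℝ) / 2 ^ n) ∪ dyI n k) _
        (measurableSet_Ico.union (measurableSet_dyI n k)) fun x _ => by rw [hsplit],
      indL1_union measurableSet_Ico (measurableSet_dyI n k) hdisj]
    exact Submodule.add_mem _ (ih (by omega)) (indL1_dyI_mem_span (by omega))

lemma indL1_Ico_zero_mem_closure_span {c : ℝ} (hc0 : 0 ≤ c) (hc1 : c ≤ 1) :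
    indL1 (Ico 0 c) measurableSet_Ico ∈
      (Submodule.span ℝ (range haarL1)).topologicalClosure := by
  set d : ℕ → ℝ := fun n => ⌊c * 2 ^ n⌋₊ / 2 ^ n
  have hd_le : ∀ n, d n ≤ c := fun n => by
    rw [div_le_iff₀ (by positivity)]
    exact Nat.floor_le (by positivity)
  have hd_gt : ∀ n, c - 1 / 2 ^ n < d n := fun n => by
    rw [sub_lt_iff_lt_add, ← add_div, lt_div_iff₀ (by positivity)]
    exact Nat.lt_floor_add_one _
  have hsymm : ∀ n, mu01 (Ico 0 (d n) ∆ Ico 0 c) ≤ ENNReal.ofReal (1 / 2 ^ n) := fun n => by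
    have hsub : Ico 0 (d n) ∆ Ico 0 c ⊆ Ico (d n) c := by
      rw [symmDiff_of_le (Ico_subset_Ico_right (hd_le n))]
      rintro x ⟨⟨hx0, hxc⟩, hx⟩
      exact ⟨not_lt.1 fun h => hx ⟨hx0, h⟩, hxc⟩
    calc mu01 (Ico 0 (d n) ∆ Ico 0 c) ≤ volume (Ico (d n) c) :=
          (measure_mono hsub).trans (Measure.restrict_le_self _)
      _ ≤ ENNReal.ofReal (1 / 2 ^ n) := by
          rw [Real.volume_Ico]
          exact ENNReal.ofReal_le_ofReal (by linarith [hd_gt n])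
  have hpow : Tendsto (fun n : ℕ => ENNReal.ofReal (1 / 2 ^ n)) atTop (𝓝 0) := by
    rw [← ENNReal.ofReal_zero]
    refine ENNReal.tendsto_ofReal ?_
    simp_rw [← one_div_pow]
    exact tendsto_pow_atTop_nhds_zero_of_lt_one (by norm_num) (by norm_num)
  have hlim : Tendsto (fun n => indL1 (Ico 0 (d n)) measurableSet_Ico) atTop
      (𝓝 (indL1 (Ico 0 c) measurableSet_Ico)) :=
    tendsto_indicatorConstLp_set ENNReal.one_ne_top
      (tendsto_of_tendsto_of_tendsto_of_le_of_le tendsto_const_nhds hpow (fun _ => zero_le)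
        hsymm)
  refine (Submodule.isClosed_topologicalClosure _).mem_of_tendsto hlim (.of_forall fun n => ?_)
  refine Submodule.le_topologicalClosure _ (indL1_Ico_zero_mem_span n (Nat.floor_le_of_le ?_))
  push_cast
  nlinarith [pow_pos (two_pos : (0 : ℝ) < 2) n]

lemma indL1_Iio_mem_closure_span (b : ℝ) :
    indL1 (Iio b) measurableSet_Iio ∈ (Submodule.span ℝ (range haarL1)).topologicalClosure := by
  rw [indL1_congr _ measurableSet_Ico (t := Ico 0 (max 0 (min b 1))) fun x hx => by
    simp only [mem_Iio, mem_Ico, hx.1, true_and, lt_max_iff, lt_min_iff, hx.2, and_true]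
    exact ⟨.inr, fun h => h.resolve_left (not_lt.2 hx.1)⟩]
  exact indL1_Ico_zero_mem_closure_span (le_max_left _ _) (max_le zero_le_one (min_le_right _ _))

lemma dense_span_range_haarL1 :
    Dense (Submodule.span ℝ (range haarL1) : Set (Lp ℝ 1 mu01)) := by
  have hclosed := Submodule.isClosed_topologicalClosure (Submodule.span ℝ (range haarL1))
  have huniv : indL1 univ .univ ∈ (Submodule.span ℝ (range haarL1)).topologicalClosure := by
    rw [indL1_congr _ measurableSet_Ico fun x hx => by simpa using hx]
    exact Submodule.le_topologicalClosure _ (Submodule.subset_span ⟨none, rfl⟩)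
  refine Submodule.dense_iff_topologicalClosure_eq_top.2
    (Lp.submodule_eq_top_of_indicatorConstLp_mem ENNReal.one_ne_top hclosed fun s hs _ => ?_)
  exact Lp.indicatorConstLp_mem_of_isPiSystem ENNReal.one_ne_top hclosed
    (BorelSpace.measurable_eq.trans (borel_eq_generateFrom_Iio ℝ)) isPiSystem_Iio huniv
    (by rintro _ ⟨b, rfl⟩ _; exact indL1_Iio_mem_closure_span b) hs

end HaarDensity

theorem statement4 (A : Set (Option (ℕ × ℕ)))
    (hA : ∃ S : Set (ℕ → Bool), S.Nonempty ∧ A = {I | ∃ θ ∈ S, ∃ k, I = branchI θ k}) :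
    ∃ D : Lp ℝ 1 mu01 →L[ℝ] Lp ℝ 1 mu01,
      (∀ I, D (haarL1 I) = A.indicator (fun _ => (1 : ℝ)) I • haarL1 I) ∧
      ‖D‖ ≤ 1 ∧ D.comp D = D ∧
      Set.range D = ((Submodule.span ℝ (haarL1 '' A)).topologicalClosure : Set (Lp ℝ 1 mu01)) := by
  obtain ⟨S, hS, rfl⟩ := hA
  have hD := condExpL1CLM_haarL1 hS
  have hdense := dense_span_range_haarL1
  exact ⟨_, hD, norm_condExpL1CLM_le_one _,
    ContinuousLinearMap.comp_self_of_apply_eq_indicator_smul hdense hD,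
    ContinuousLinearMap.range_eq_closure_span_of_apply_eq_indicator_smul hdense hD⟩
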